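/- arXiv:2307.14769 — 4 statements merged into one kernel-verified Lean document; each statement's English description precedes it below -/
import Mathlib

section
/- For every polyhedral graph there exists a rigid vertex, i.e., a vertex adjacent to at most 3 non-triangular faces. -/
/-- An abstract polyhedral graph: a 3-connected simple planar graph on the
2-sphere, recorded via its vertex/face incidence structure, vertex and face
degrees (all at least 3), Euler's formula and the handshake identities. -/
structure PolyhedralGraph where
  Vert : Type
  Face : Type
  [instVF : Fintype Vert]
  [instFF : Fintype Face]
  incid : Vert → Face → Bool
  vdeg : Vert → ℕ
  fdeg : Face → ℕ
  E : ℕ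
  vdeg_ge : ∀ v, 3 ≤ vdeg v
  fdeg_ge : ∀ f, 3 ≤ fdeg f
  euler : (Fintype.card Vert : ℤ) - (E : ℤ) + (Fintype.card Face : ℤ) = 2
  handshake_v : ∑ v, vdeg v = 2 * E
  handshake_f : ∑ f, fdeg f = 2 * E
  faces_at_vertex : ∀ v, (Finset.univ.filter fun f => incid v f = true).card = vdeg v
  vertices_of_face : ∀ f, (Finset.univ.filter fun v => incid v f = true).card = fdeg f

attribute [instance] PolyhedralGraph.instVF PolyhedralGraph.instFF

namespace PolyhedralGraph

variable (G : PolyhedralGraph)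

/-- `V_n`: the number of vertices of degree `n`. -/
def Vcount (n : ℕ) : ℕ := (Finset.univ.filter fun v => G.vdeg v = n).card

/-- `F_n`: the number of faces of degree `n`. -/
def Fcount (n : ℕ) : ℕ := (Finset.univ.filter fun f => G.fdeg f = n).card

/-- `τ(v)`: the number of non-triangular faces adjacent to the vertex `v`. -/
def tau (v : G.Vert) : ℕ :=
  (Finset.univ.filter fun f => G.incid v f = true ∧ 3 < G.fdeg f).card

end PolyhedralGraph

/-- Every polyhedral graph has a rigid vertex, i.e. a vertex adjacent to at
most three non-triangular faces. -/
theorem statement1 (G : PolyhedralGraph) : ∃ v : G.Vert, G.tau v ≤ 3 := by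
  classical
  by_contra h
  push_neg at h
  set A := Finset.univ.filter (fun f => 3 < G.fdeg f) with hA
  set Tr := Finset.univ.filter (fun f => ¬ 3 < G.fdeg f) with hTr
  -- F = |A| + |Tr|
  have hF : A.card + Tr.card = Fintype.card G.Face := by
    rw [hA, hTr]
    simpa using Finset.card_filter_add_card_filter_not
      (s := Finset.univ) (p := fun f => 3 < G.fdeg f)
  -- sum of face degrees splits
  have htri : ∑ f ∈ Tr, G.fdeg f = Tr.card * 3 := by
    apply Finset.sum_const_nat
    intro f hf
    rw [hTr, Finset.mem_filter] at hf
    have := G.fdeg_ge f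
    omega
  have hsplit : (∑ f ∈ A, G.fdeg f) + Tr.card * 3 = 2 * G.E := by
    rw [← htri, hA, hTr, Finset.sum_filter_add_sum_filter_not, G.handshake_f]
  -- each face in A has degree ≥ 4
  have hIN : 4 * A.card ≤ ∑ f ∈ A, G.fdeg f := by
    calc 4 * A.card = ∑ _f ∈ A, 4 := by rw [Finset.sum_const, smul_eq_mul, mul_comm]
      _ ≤ ∑ f ∈ A, G.fdeg f := by
          apply Finset.sum_le_sum
          intro f hf
          rw [hA, Finset.mem_filter] at hf
          omega
  -- double counting: ∑ tau = ∑_{f ∈ A} fdeg f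
  have hv : ∀ v, G.tau v = ∑ f ∈ A, (if G.incid v f = true then 1 else 0) := by
    intro v
    rw [PolyhedralGraph.tau, Finset.card_filter, hA, Finset.sum_filter]
    apply Finset.sum_congr rfl
    intro f _
    by_cases h1 : G.incid v f = true <;> by_cases h2 : 3 < G.fdeg f <;> simp [h1, h2]
  have key : ∑ v, G.tau v = ∑ f ∈ A, G.fdeg f := by
    rw [Finset.sum_congr rfl (fun v _ => hv v), Finset.sum_comm]
    apply Finset.sum_congr rfl
    intro f _
    rw [← G.vertices_of_face f, Finset.card_filter]
  -- 4V ≤ ∑ tau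
  have hV : 4 * Fintype.card G.Vert ≤ ∑ v, G.tau v := by
    calc 4 * Fintype.card G.Vert = ∑ _v : G.Vert, 4 := by
          rw [Finset.sum_const, smul_eq_mul, mul_comm, Finset.card_univ]
      _ ≤ ∑ v, G.tau v := Finset.sum_le_sum (fun v _ => h v)
  -- ∑ tau ≤ ∑ vdeg = 2E
  have htauled : ∑ v, G.tau v ≤ 2 * G.E := by
    rw [← G.handshake_v]
    apply Finset.sum_le_sum
    intro v _
    rw [← G.faces_at_vertex v, PolyhedralGraph.tau]
    apply Finset.card_le_card
    intro f hf
    rw [Finset.mem_filter] at hf ⊢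
    exact ⟨hf.1, hf.2.1⟩
  -- Euler in ℕ
  have heuler : Fintype.card G.Vert + Fintype.card G.Face = G.E + 2 := by
    have := G.euler
    omega
  rw [key] at hV htauled
  omega
end

section
/- For every polyhedral graph there exists a strongly-rigid vertex, i.e., a vertex v such that either deg(v) ≤ 4 and τ(v) ≤ 3, or deg(v) ≥ 5 and τ(v) ≤ 1, where τ(v) is the number of non-triangular faces adjacent to v. -/
/-- Every polyhedral graph has a strongly-rigid vertex: a vertex `v` with
either `deg v ≤ 4` and `τ(v) ≤ 3`, or `deg v ≥ 5` and `τ(v) ≤ 1`. -/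
theorem statement2 (G : PolyhedralGraph) :
    ∃ v : G.Vert, (G.vdeg v ≤ 4 ∧ G.tau v ≤ 3) ∨ (5 ≤ G.vdeg v ∧ G.tau v ≤ 1) := by
  by_contra h
  push_neg at h
  -- τ(v) ≤ deg(v)
  have htle : ∀ v, G.tau v ≤ G.vdeg v := by
    intro v
    rw [← G.faces_at_vertex v]
    apply Finset.card_le_card
    intro f hf
    simp only [Finset.mem_filter, Finset.mem_univ, true_and] at hf ⊢
    exact hf.1
  -- per-vertex inequality under the negation
  have hv : ∀ v, 12 ≤ 2 * G.vdeg v + G.tau v := by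
    intro v
    have h1 := (h v).1
    have h2 := (h v).2
    have h3 := htle v
    have h4 := G.vdeg_ge v
    omega
  -- double counting: Σ τ(v) = Σ_{f nontriangular} fdeg f
  have hdc : ∑ v, G.tau v
      = ∑ f ∈ Finset.univ.filter (fun f => 3 < G.fdeg f), G.fdeg f := by
    unfold PolyhedralGraph.tau
    simp_rw [Finset.card_filter]
    rw [Finset.sum_comm, Finset.sum_filter]
    apply Finset.sum_congr rfl
    intro f _
    by_cases hf : 3 < G.fdeg f
    · simp only [hf, and_true, if_true]
      rw [← G.vertices_of_face f, Finset.card_filter]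
    · simp [hf]
  -- vertex-side sum
  have hvsum : 12 * Fintype.card G.Vert ≤ 2 * (2 * G.E) + ∑ v, G.tau v := by
    calc 12 * Fintype.card G.Vert = ∑ _v : G.Vert, 12 := by
          rw [Finset.sum_const, Finset.card_univ, smul_eq_mul, mul_comm]
      _ ≤ ∑ v, (2 * G.vdeg v + G.tau v) := Finset.sum_le_sum fun v _ => hv v
      _ = 2 * (∑ v, G.vdeg v) + ∑ v, G.tau v := by
          rw [Finset.sum_add_distrib, Finset.mul_sum]
      _ = 2 * (2 * G.E) + ∑ v, G.tau v := by rw [G.handshake_v]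
  -- face-side sum
  have hfsum : 12 * Fintype.card G.Face + ∑ v, G.tau v ≤ 4 * (2 * G.E) := by
    rw [hdc]
    have key : ∀ f : G.Face,
        12 + (if 3 < G.fdeg f then G.fdeg f else 0) ≤ 4 * G.fdeg f := by
      intro f
      have := G.fdeg_ge f
      by_cases hf : 3 < G.fdeg f <;> simp [hf] <;> omega
    calc 12 * Fintype.card G.Face
          + ∑ f ∈ Finset.univ.filter (fun f => 3 < G.fdeg f), G.fdeg f
        = ∑ f : G.Face, (12 + if 3 < G.fdeg f then G.fdeg f else 0) := by
          rw [Finset.sum_add_distrib, Finset.sum_const, Finset.card_univ,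
            smul_eq_mul, mul_comm, Finset.sum_ite, Finset.sum_const,
            smul_eq_mul, mul_zero, add_zero]
      _ ≤ ∑ f : G.Face, 4 * G.fdeg f := Finset.sum_le_sum fun f _ => key f
      _ = 4 * ∑ f, G.fdeg f := by rw [Finset.mul_sum]
      _ = 4 * (2 * G.E) := by rw [G.handshake_f]
  have heuler := G.euler
  omega
end

section
/- If a polyhedral graph has no strongly-rigid vertex, then 3F_3 ≤ 3V_5 + 4V_6 + 5V_7 + ⋯ = Σ_{n≥5}(n-2)V_n, which contradicts 3F_3 ≥ 3(Σ_{n≥5}(n-4)V_n + 8); hence every polyhedral graph contains a vertex of degree ≤ 4 adjacent to a triangular face, or a vertex of degree 3, or a vertex of degree ≥ 5 adjacent to at most one non-triangular face. -/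
open Finset

namespace PolyAux

variable (G : PolyhedralGraph)

/-- The number of triangular faces adjacent to `v`. -/
def triCount (v : G.Vert) : ℕ :=
  (Finset.univ.filter fun f => G.incid v f = true ∧ G.fdeg f = 3).card

lemma tri_add_tau (v : G.Vert) : triCount G v + G.tau v = G.vdeg v := by
  classical
  rw [triCount, PolyhedralGraph.tau, ← G.faces_at_vertex v,
    Finset.card_filter, Finset.card_filter, Finset.card_filter, ← Finset.sum_add_distrib]
  refine Finset.sum_congr rfl fun f _ => ?_
  have h3 := G.fdeg_ge f
  by_cases hi : G.incid v f = true
  · simp only [hi, true_and]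
    split_ifs <;> omega
  · simp [hi]

lemma double_count : ∑ v, triCount G v = 3 * G.Fcount 3 := by
  classical
  calc ∑ v, triCount G v
      = ∑ v, ∑ f, (if G.incid v f = true ∧ G.fdeg f = 3 then 1 else 0) :=
        Finset.sum_congr rfl fun v _ => Finset.card_filter _ _
    _ = ∑ f, ∑ v, (if G.incid v f = true ∧ G.fdeg f = 3 then 1 else 0) := Finset.sum_comm
    _ = ∑ f, (if G.fdeg f = 3 then 3 else 0) := by
        refine Finset.sum_congr rfl fun f _ => ?_
        by_cases h3 : G.fdeg f = 3
        · rw [if_pos h3]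
          calc ∑ v, (if G.incid v f = true ∧ G.fdeg f = 3 then 1 else 0)
              = ∑ v, (if G.incid v f = true then 1 else 0) := by simp [h3]
            _ = (Finset.univ.filter fun v => G.incid v f = true).card :=
                (Finset.card_filter _ _).symm
            _ = 3 := by rw [G.vertices_of_face f, h3]
        · simp [h3]
    _ = 3 * G.Fcount 3 := by
        rw [PolyhedralGraph.Fcount, Finset.card_filter, Finset.mul_sum]
        refine Finset.sum_congr rfl fun f _ => ?_
        split_ifs <;> simp

lemma vdeg_le (v : G.Vert) : G.vdeg v ≤ 2 * G.E := by
  rw [← G.handshake_v]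
  exact Finset.single_le_sum (f := G.vdeg) (fun _ _ => Nat.zero_le _) (Finset.mem_univ v)

lemma finsum_eq (h : ℕ → ℕ) :
    ∑ᶠ n ∈ {n : ℕ | 5 ≤ n}, h n * G.Vcount n
      = ∑ v ∈ Finset.univ.filter (fun v => 5 ≤ G.vdeg v), h (G.vdeg v) := by
  classical
  set T : Finset ℕ := (Finset.range (2 * G.E + 1)).filter (fun n => 5 ≤ n) with hT
  have step1 : ∑ᶠ n ∈ {n : ℕ | 5 ≤ n}, h n * G.Vcount n = ∑ n ∈ T, h n * G.Vcount n := by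
    apply finsum_mem_eq_sum_of_subset
    · rintro n ⟨hn5, hns⟩
      rw [Function.mem_support] at hns
      rw [hT, Finset.mem_coe, Finset.mem_filter, Finset.mem_range]
      refine ⟨?_, hn5⟩
      by_contra hlt
      push_neg at hlt
      apply hns
      have hV : G.Vcount n = 0 := by
        rw [PolyhedralGraph.Vcount, Finset.card_eq_zero, Finset.filter_eq_empty_iff]
        intro v _
        have := vdeg_le G v
        omega
      rw [hV, Nat.mul_zero]
    · intro n hn
      rw [Finset.mem_coe, Finset.mem_filter] at hn
      exact hn.2
  have hmaps : ∀ v ∈ Finset.univ.filter (fun v => 5 ≤ G.vdeg v), G.vdeg v ∈ T := by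
    intro v hv
    rw [Finset.mem_filter] at hv
    have := vdeg_le G v
    simp only [hT, Finset.mem_filter, Finset.mem_range]
    exact ⟨by omega, hv.2⟩
  have step2 : ∑ n ∈ T, h n * G.Vcount n
      = ∑ v ∈ Finset.univ.filter (fun v => 5 ≤ G.vdeg v), h (G.vdeg v) := by
    rw [← Finset.sum_fiberwise_of_maps_to hmaps (fun v => h (G.vdeg v))]
    refine Finset.sum_congr rfl fun n hn => ?_
    have h5 : 5 ≤ n := (Finset.mem_filter.mp hn).2
    have hset : (Finset.univ.filter (fun v => 5 ≤ G.vdeg v)).filter (fun v => G.vdeg v = n)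
        = Finset.univ.filter (fun v => G.vdeg v = n) := by
      rw [Finset.filter_filter]
      refine Finset.filter_congr fun v _ => ?_
      constructor
      · exact fun hh => hh.2
      · exact fun hh => ⟨by omega, hh⟩
    rw [hset]
    refine Eq.symm ?_
    calc ∑ v ∈ Finset.univ.filter (fun v => G.vdeg v = n), h (G.vdeg v)
        = ∑ v ∈ Finset.univ.filter (fun v => G.vdeg v = n), h n := by
          refine Finset.sum_congr rfl fun v hv => ?_
          rw [(Finset.mem_filter.mp hv).2]
      _ = G.Vcount n * h n := by rw [Finset.sum_const, smul_eq_mul, PolyhedralGraph.Vcount]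
      _ = h n * G.Vcount n := Nat.mul_comm _ _
  rw [step1, step2]

end PolyAux

/-- If a polyhedral graph has no strongly-rigid vertex then
`3F₃ ≤ Σ_{n≥5}(n-2)Vₙ` and `3F₃ ≥ 3(Σ_{n≥5}(n-4)Vₙ + 8)` (a contradiction);
hence every polyhedral graph contains a vertex of degree ≤ 4 adjacent to a
triangular face, or a vertex of degree 3, or a vertex of degree ≥ 5 adjacent
to at most one non-triangular face. -/
theorem statement3 (G : PolyhedralGraph) :
    ((∀ v : G.Vert,
        ¬ ((G.vdeg v ≤ 4 ∧ G.tau v ≤ 3) ∨ (5 ≤ G.vdeg v ∧ G.tau v ≤ 1))) →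
      3 * G.Fcount 3 ≤ (∑ᶠ n ∈ {n : ℕ | 5 ≤ n}, (n - 2) * G.Vcount n) ∧
      3 * ((∑ᶠ n ∈ {n : ℕ | 5 ≤ n}, (n - 4) * G.Vcount n) + 8) ≤ 3 * G.Fcount 3)
    ∧ ∃ v : G.Vert,
        (G.vdeg v ≤ 4 ∧ ∃ f, G.incid v f = true ∧ G.fdeg f = 3)
        ∨ G.vdeg v = 3
        ∨ (5 ≤ G.vdeg v ∧ G.tau v ≤ 1) := by
  classical
  set S : Finset G.Vert := Finset.univ.filter (fun v => 5 ≤ G.vdeg v) with hS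
  -- the main conditional part
  have main : (∀ v : G.Vert,
        ¬ ((G.vdeg v ≤ 4 ∧ G.tau v ≤ 3) ∨ (5 ≤ G.vdeg v ∧ G.tau v ≤ 1))) →
      3 * G.Fcount 3 ≤ (∑ᶠ n ∈ {n : ℕ | 5 ≤ n}, (n - 2) * G.Vcount n) ∧
      3 * ((∑ᶠ n ∈ {n : ℕ | 5 ≤ n}, (n - 4) * G.Vcount n) + 8) ≤ 3 * G.Fcount 3 := by
    intro H
    have H1 : ∀ v, G.vdeg v ≤ 4 → 4 ≤ G.tau v := by
      intro v hv
      have hH := H v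
      by_contra h
      push_neg at h
      exact hH (Or.inl ⟨hv, by omega⟩)
    have H2 : ∀ v, 5 ≤ G.vdeg v → 2 ≤ G.tau v := by
      intro v hv
      have := H v
      push_neg at this
      omega
    have Hdeg4 : ∀ v, 4 ≤ G.vdeg v := by
      intro v
      have h3 := G.vdeg_ge v
      have htt := PolyAux.tri_add_tau G v
      by_contra hc
      push_neg at hc
      have := H1 v (by omega)
      omega
    constructor
    · -- first inequality
      rw [PolyAux.finsum_eq G (fun n => n - 2), ← hS, ← PolyAux.double_count G]
      have : ∑ v, PolyAux.triCount G v
          ≤ ∑ v, (if 5 ≤ G.vdeg v then G.vdeg v - 2 else 0) := by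
        refine Finset.sum_le_sum fun v _ => ?_
        have htt := PolyAux.tri_add_tau G v
        have h3 := G.vdeg_ge v
        by_cases h5 : 5 ≤ G.vdeg v
        · have := H2 v h5
          rw [if_pos h5]; omega
        · have := H1 v (by omega)
          rw [if_neg h5]; omega
      calc ∑ v, PolyAux.triCount G v ≤ ∑ v, (if 5 ≤ G.vdeg v then G.vdeg v - 2 else 0) := this
        _ = ∑ v ∈ S, (G.vdeg v - 2) := by rw [hS, Finset.sum_filter]
    · -- second inequality
      rw [PolyAux.finsum_eq G (fun n => n - 4), ← hS]
      have hv' : (∑ v, (G.vdeg v : ℤ)) = 2 * G.E := by exact_mod_cast G.handshake_v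
      have hf' : (∑ f, (G.fdeg f : ℤ)) = 2 * G.E := by exact_mod_cast G.handshake_f
      have keyZ : (∑ v, ((4 : ℤ) - G.vdeg v)) + (∑ f, ((4 : ℤ) - G.fdeg f)) = 8 := by
        rw [Finset.sum_sub_distrib, Finset.sum_sub_distrib, Finset.sum_const,
          Finset.sum_const, Finset.card_univ, Finset.card_univ, hv', hf']
        have he := G.euler
        simp only [nsmul_eq_mul]
        push_cast at he ⊢
        linarith
      have hF : (∑ f, ((4 : ℤ) - G.fdeg f)) ≤ (G.Fcount 3 : ℤ) := by
        have : (G.Fcount 3 : ℤ) = ∑ f, (if G.fdeg f = 3 then (1 : ℤ) else 0) := by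
          rw [PolyhedralGraph.Fcount, Finset.card_filter]
          push_cast
          rfl
        rw [this]
        refine Finset.sum_le_sum fun f _ => ?_
        have := G.fdeg_ge f
        split_ifs with h <;> omega
      have hVZ : (∑ v, ((4 : ℤ) - G.vdeg v))
          = - ∑ v, (if 5 ≤ G.vdeg v then (G.vdeg v : ℤ) - 4 else 0) := by
        rw [← Finset.sum_neg_distrib]
        refine Finset.sum_congr rfl fun v _ => ?_
        have := Hdeg4 v
        split_ifs with h <;> omega
      have hfilterZ : ∑ v, (if 5 ≤ G.vdeg v then (G.vdeg v : ℤ) - 4 else 0)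
          = ∑ v ∈ S, ((G.vdeg v : ℤ) - 4) := by rw [hS, Finset.sum_filter]
      have hcast : (((∑ v ∈ S, (G.vdeg v - 4)) : ℕ) : ℤ) = ∑ v ∈ S, ((G.vdeg v : ℤ) - 4) := by
        push_cast [hS]
        refine Finset.sum_congr rfl fun v hv => ?_
        rw [Finset.mem_filter] at hv
        have : 5 ≤ G.vdeg v := hv.2
        omega
      have final : (∑ v ∈ S, (G.vdeg v - 4)) + 8 ≤ G.Fcount 3 := by
        have : (((∑ v ∈ S, (G.vdeg v - 4)) : ℕ) : ℤ) + 8 ≤ (G.Fcount 3 : ℤ) := by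
          rw [hcast, ← hfilterZ]
          linarith
        exact_mod_cast this
      omega
  refine ⟨main, ?_⟩
  by_contra hc
  push_neg at hc
  have H : ∀ v : G.Vert,
      ¬ ((G.vdeg v ≤ 4 ∧ G.tau v ≤ 3) ∨ (5 ≤ G.vdeg v ∧ G.tau v ≤ 1)) := by
    intro v hv
    obtain ⟨h1, h2, h3⟩ := hc v
    rcases hv with ⟨hd4, ht3⟩ | hb
    · have hd := G.vdeg_ge v
      have hd4' : G.vdeg v = 4 := by omega
      have htt := PolyAux.tri_add_tau G v
      have htri : 1 ≤ PolyAux.triCount G v := by omega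
      obtain ⟨f, hf⟩ := Finset.card_pos.mp htri
      rw [Finset.mem_filter] at hf
      exact h1 hd4 f hf.2.1 hf.2.2
    · have := h3 hb.1
      omega
  obtain ⟨ineq1, ineq2⟩ := main H
  -- derive the contradiction
  rw [PolyAux.finsum_eq G (fun n => n - 2), ← hS] at ineq1
  rw [PolyAux.finsum_eq G (fun n => n - 4), ← hS] at ineq2
  have hterm : ∑ v ∈ S, (G.vdeg v - 2) ≤ 3 * ∑ v ∈ S, (G.vdeg v - 4) := by
    rw [Finset.mul_sum]
    refine Finset.sum_le_sum fun v hv => ?_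
    simp only [hS, Finset.mem_filter] at hv
    have : 5 ≤ G.vdeg v := hv.2
    omega
  omega
end

section
/- Given any real numbers a, b, c, A, B, C in (0,π) ∪ (π,2π) satisfying the generalized spherical trigonometry (all three cosine rules, all three dual cosine rules, and the sine rules), there exists a spherical triangle, possibly self-intersecting, realizing these side lengths and interior angles, and it is unique up to isometry. -/
noncomputable section
open Real
open scoped RealInnerProductSpace

/-- Euclidean 3-space; the unit sphere in it is the 2-sphere `S²`. -/
abbrev E3 : Type := EuclideanSpace ℝ (Fin 3)

/-- The determinant (triple product) of three vectors in `ℝ³`.  For unit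
vectors `p, x, q`, the condition `0 < det3 p x q` says that `q` lies strictly
on the left of the oriented great circle through `p` and `x`; at a vertex `x`
of a spherical polygon with neighbours `p, q` this is equivalent to the
interior angle at `x` (measured on the left side) being strictly less
than `π`. -/
def det3 (u v w : E3) : ℝ :=
  u 0 * (v 1 * w 2 - v 2 * w 1) - u 1 * (v 0 * w 2 - v 2 * w 0) +
    u 2 * (v 0 * w 1 - v 1 * w 0)

/-- The (short) geodesic arc on the unit sphere joining two unit vectors
`v` and `w`: the radial projection of the segment between them. -/
def arcSeg (v w : E3) : Set E3 :=
  {x | ∃ a b : ℝ, 0 ≤ a ∧ 0 ≤ b ∧ 0 < a + b ∧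
    x = ‖a • v + b • w‖⁻¹ • (a • v + b • w)}

/-- The spherical (great-circle) distance between two unit vectors. -/
def sdist (v w : E3) : ℝ := Real.arccos ⟪v, w⟫

/-- The spherical angle at `x` between the geodesics from `x` toward `p` and
from `x` toward `q`: the angle between the tangent directions, valued
in `[0, π]`. -/
def sangle (p x q : E3) : ℝ :=
  InnerProductGeometry.angle (p - ⟪p, x⟫ • x) (q - ⟪q, x⟫ • x)

/-- The length of the chosen geodesic arc between two unit vectors: the short
arc has length `arccos ⟪x, y⟫` and the long arc has length
`2π - arccos ⟪x, y⟫`. -/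
def glen (x y : E3) (long : Bool) : ℝ :=
  if long then 2 * π - sdist x y else sdist x y

/-- The interior angle of a generalized spherical triangle at a vertex, in
terms of the base (unoriented) angle `θ ∈ (0, π)` at that vertex, the
short/long choices for the opposite side (`opp`) and the two adjacent sides
(`adj₁`, `adj₂`), and the choice `o` of the side of the triangle on which
angles are measured.  This encodes the substitution rules
`(a,b,c;A,B,C) ↦ (2π-a,b,c;2π-A,π-B,π-C)`, etc., of generalized spherical
trigonometry. -/
def gangleVal (θ : ℝ) (opp adj₁ adj₂ o : Bool) : ℝ :=
  let base :=
    if xor adj₁ adj₂ then π - θ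
    else if opp || adj₁ || adj₂ then 2 * π - θ
    else θ
  if o then 2 * π - base else base

/-- `GTri p q r sa sb sc o a b c A B C` says that the generalized spherical
triangle with vertices `p, q, r` on the unit sphere, short/long arc choices
`sa, sb, sc` for the sides `qr, pr, pq`, and side choice `o`, realizes the
side lengths `a, b, c` and the interior angles `A, B, C` (with `a, A`
opposite `p`, etc.). -/
def GTri (p q r : E3) (sa sb sc o : Bool) (a b c A B C : ℝ) : Prop :=
  ‖p‖ = 1 ∧ ‖q‖ = 1 ∧ ‖r‖ = 1 ∧
  glen q r sa = a ∧ glen p r sb = b ∧ glen p q sc = c ∧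
  gangleVal (sangle q p r) sa sb sc o = A ∧
  gangleVal (sangle p q r) sb sa sc o = B ∧
  gangleVal (sangle p r q) sc sa sb o = C

/-! ### Auxiliary lemmas -/

section Aux

lemma st14_sin_sign {x : ℝ} (hx : x ∈ Set.Ioo 0 π ∪ Set.Ioo π (2*π)) :
    (x < π ∧ 0 < Real.sin x) ∨ (π < x ∧ Real.sin x < 0) := by
  rcases hx with ⟨h1,h2⟩|⟨h1,h2⟩
  · exact .inl ⟨h2, Real.sin_pos_of_pos_of_lt_pi h1 h2⟩
  · refine .inr ⟨h1, ?_⟩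
    have := Real.sin_pos_of_pos_of_lt_pi (x := x - π) (by linarith) (by linarith)
    rw [Real.sin_sub_pi] at this; linarith

lemma st14_sin_ne {x : ℝ} (hx : x ∈ Set.Ioo 0 π ∪ Set.Ioo π (2*π)) : Real.sin x ≠ 0 := by
  rcases st14_sin_sign hx with ⟨_,h⟩|⟨_,h⟩ <;> intro h0 <;> linarith

lemma st14_cos_sq_lt {x : ℝ} (hx : x ∈ Set.Ioo 0 π ∪ Set.Ioo π (2*π)) :
    Real.cos x ^ 2 < 1 := by
  have h := Real.sin_sq_add_cos_sq x
  have := st14_sin_ne hx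
  nlinarith [sq_nonneg (Real.sin x), sq_abs (Real.sin x), abs_pos.mpr this]

lemma st14_sqrt_one_sub_cos_sq {x : ℝ} (_hx : x ∈ Set.Ioo 0 π ∪ Set.Ioo π (2*π)) :
    Real.sqrt (1 - Real.cos x ^ 2) = |Real.sin x| := by
  rw [← Real.sin_sq, Real.sqrt_sq_eq_abs]

lemma st14_sqrt_pos {x : ℝ} (hx : x ∈ Set.Ioo 0 π ∪ Set.Ioo π (2*π)) :
    0 < Real.sqrt (1 - Real.cos x ^ 2) := by
  rw [st14_sqrt_one_sub_cos_sq hx]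
  exact abs_pos.mpr (st14_sin_ne hx)

lemma st14_sin_eq_sign_mul {x : ℝ} (hx : x ∈ Set.Ioo 0 π ∪ Set.Ioo π (2*π)) :
    Real.sin x = (if x < π then 1 else -1) * Real.sqrt (1 - Real.cos x ^ 2) := by
  rw [st14_sqrt_one_sub_cos_sq hx]
  rcases st14_sin_sign hx with ⟨h1,h2⟩|⟨h1,h2⟩
  · rw [if_pos h1, abs_of_pos h2]; ring
  · rw [if_neg (by linarith), abs_of_neg h2]; ring

lemma st14_arccos_cos_of {x : ℝ} (hx : x ∈ Set.Ioo 0 π ∪ Set.Ioo π (2*π)) :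
    Real.arccos (Real.cos x) = if x < π then x else 2*π - x := by
  rcases hx with ⟨h1,h2⟩|⟨h1,h2⟩
  · rw [if_pos h2, Real.arccos_cos (le_of_lt h1) (le_of_lt h2)]
  · rw [if_neg (by linarith), ← Real.cos_two_pi_sub,
      Real.arccos_cos (by linarith) (by linarith)]

lemma st14_proj_inner (p x q : E3) (hx : ‖x‖ = 1) :
    ⟪p - ⟪p,x⟫ • x, q - ⟪q,x⟫ • x⟫ = ⟪p,q⟫ - ⟪p,x⟫*⟪q,x⟫ := by
  have hxx : ⟪x,x⟫ = (1:ℝ) := by rw [real_inner_self_eq_norm_sq, hx]; norm_num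
  simp only [inner_sub_left, inner_sub_right, real_inner_smul_left, real_inner_smul_right,
    hxx, real_inner_comm x p, real_inner_comm x q]
  ring

lemma st14_proj_norm (p x : E3) (hp : ‖p‖ = 1) (hx : ‖x‖ = 1) :
    ‖p - ⟪p,x⟫ • x‖ = Real.sqrt (1 - ⟪p,x⟫^2) := by
  rw [norm_eq_sqrt_real_inner, st14_proj_inner p x p hx, real_inner_self_eq_norm_sq, hp]
  norm_num
  ring_nf

lemma st14_sangle_eq_arccos (p x q : E3) (hp : ‖p‖ = 1) (hx : ‖x‖ = 1) (hq : ‖q‖ = 1) :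
    sangle p x q = Real.arccos ((⟪p,q⟫ - ⟪p,x⟫*⟪q,x⟫) /
      (Real.sqrt (1 - ⟪p,x⟫^2) * Real.sqrt (1 - ⟪q,x⟫^2))) := by
  rw [sangle, InnerProductGeometry.angle, st14_proj_inner p x q hx, st14_proj_norm p x hp hx,
    st14_proj_norm q x hq hx]

/-- The choice of side `o` forced at a vertex. -/
def st14_oCh (s1 s2 s3 : Bool) (X : ℝ) : Bool :=
  if xor s2 s3 then decide (π < X) else if s1 || s2 || s3 then decide (X < π) else decide (π < X)

lemma st14_vertex (A : ℝ) (s1 s2 s3 : Bool) (hA : A ∈ Set.Ioo 0 π ∪ Set.Ioo π (2*π)) :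
    gangleVal (Real.arccos ((if xor s2 s3 then -1 else 1) * Real.cos A)) s1 s2 s3
      (st14_oCh s1 s2 s3 A) = A := by
  have hpi := Real.pi_pos
  rcases hA with ⟨h1,h2⟩|⟨h1,h2⟩
  · have dp : decide (π < A) = false := by simp [not_lt.mpr (le_of_lt h2)]
    have dq : decide (A < π) = true := by simp [h2]
    by_cases hx : xor s2 s3
    · have : (-1 : ℝ) * Real.cos A = Real.cos (π - A) := by rw [Real.cos_pi_sub]; ring
      rw [st14_oCh, if_pos hx, dp, this, Real.arccos_cos (by linarith) (by linarith)]
      simp [gangleVal, hx]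
    · have : (1 : ℝ) * Real.cos A = Real.cos A := one_mul _
      rw [st14_oCh, if_neg hx, this, Real.arccos_cos (le_of_lt h1) (le_of_lt h2)]
      by_cases hy : (s1 || s2 || s3) = true
      · rw [if_pos hy, dq]; simp [gangleVal, hx, hy]
      · rw [if_neg hy, dp]; simp [gangleVal, hx, hy]
  · have dp : decide (π < A) = true := by simp [h1]
    have dq : decide (A < π) = false := by simp [not_lt.mpr (le_of_lt h1)]
    by_cases hx : xor s2 s3
    · have : (-1 : ℝ) * Real.cos A = Real.cos (A - π) := by rw [Real.cos_sub_pi]; ring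
      rw [st14_oCh, if_pos hx, dp, this, Real.arccos_cos (by linarith) (by linarith)]
      simp [gangleVal, hx]
      ring
    · have h3 : (1 : ℝ) * Real.cos A = Real.cos (2*π - A) := by rw [Real.cos_two_pi_sub]; ring
      rw [st14_oCh, if_neg hx, h3, Real.arccos_cos (by linarith) (by linarith)]
      by_cases hy : (s1 || s2 || s3) = true
      · rw [if_pos hy, dq]; simp [gangleVal, hx, hy]
      · rw [if_neg hy, dp]; simp [gangleVal, hx, hy]

lemma st14_boolCh (ta tb tc tA tB : Bool) (h : xor tA tB = xor ta tb) :
    (if xor tb tc then tA else if ta||tb||tc then !tA else tA)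
    = (if xor ta tc then tB else if tb||ta||tc then !tB else tB) := by
  revert h; revert ta tb tc tA tB; decide

lemma st14_boolCh2 (ta tb tc tA tC : Bool) (h : xor tA tC = xor ta tc) :
    (if xor tb tc then tA else if ta||tb||tc then !tA else tA)
    = (if xor ta tb then tC else if tc||ta||tb then !tC else tC) := by
  revert h; revert ta tb tc tA tC; decide

lemma st14_pos_iff {x y : ℝ}
    (hx : (x < π ∧ 0 < Real.sin x) ∨ (π < x ∧ Real.sin x < 0))
    (hy : (y < π ∧ 0 < Real.sin y) ∨ (π < y ∧ Real.sin y < 0)) :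
    0 < Real.sin x * Real.sin y ↔ ((π<x) ↔ (π<y)) := by
  rcases hx with ⟨hx1,hx2⟩|⟨hx1,hx2⟩ <;> rcases hy with ⟨hy1,hy2⟩|⟨hy1,hy2⟩
  · exact iff_of_true (mul_pos hx2 hy2) (by constructor <;> intro h <;> linarith)
  · exact iff_of_false (by nlinarith) (by intro h; have := h.mpr hy1; linarith)
  · exact iff_of_false (by nlinarith) (by intro h; have := h.mp hx1; linarith)
  · exact iff_of_true (by nlinarith) (by constructor <;> intro h <;> linarith)

lemma st14_sign_rel {x y z w : ℝ}
    (hx : (x < π ∧ 0 < Real.sin x) ∨ (π < x ∧ Real.sin x < 0))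
    (hy : (y < π ∧ 0 < Real.sin y) ∨ (π < y ∧ Real.sin y < 0))
    (hz : (z < π ∧ 0 < Real.sin z) ∨ (π < z ∧ Real.sin z < 0))
    (hw : (w < π ∧ 0 < Real.sin w) ∨ (π < w ∧ Real.sin w < 0))
    (h : Real.sin x * Real.sin y = Real.sin z * Real.sin w) :
    xor (decide (π<x)) (decide (π<y)) = xor (decide (π<z)) (decide (π<w)) := by
  have e1 := st14_pos_iff hx hy
  have e2 := st14_pos_iff hz hw
  rw [h] at e1
  have key : ((π<x) ↔ (π<y)) ↔ ((π<z) ↔ (π<w)) := e1.symm.trans e2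
  have xd : ∀ (P Q : Prop) [Decidable P] [Decidable Q],
      xor (decide P) (decide Q) = !decide (P ↔ Q) := by
    intro P Q _ _; by_cases P <;> by_cases Q <;> simp_all
  rw [xd, xd, decide_eq_decide.mpr key]

lemma st14_xorsw : ∀ (w x y z : Bool), (xor w x = xor y z) → (xor y x = xor w z) := by decide

lemma st14_xorcm : ∀ (w x y z : Bool), (xor w x = xor y z) → (xor x w = xor z y) := by decide

lemma st14_key {x y z X : ℝ}
    (hy : y ∈ Set.Ioo 0 π ∪ Set.Ioo π (2*π)) (hz : z ∈ Set.Ioo 0 π ∪ Set.Ioo π (2*π))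
    (h : Real.cos x = Real.cos y * Real.cos z + Real.sin y * Real.sin z * Real.cos X) :
    Real.sqrt (1 - Real.cos y^2) * Real.sqrt (1 - Real.cos z^2) *
      ((if xor (decide (π<y)) (decide (π<z)) then (-1:ℝ) else 1) * Real.cos X)
      = Real.cos x - Real.cos y * Real.cos z := by
  rw [st14_sin_eq_sign_mul hy, st14_sin_eq_sign_mul hz] at h
  rcases st14_sin_sign hy with ⟨h1,_⟩|⟨h1,_⟩ <;> rcases st14_sin_sign hz with ⟨h2,_⟩|⟨h2,_⟩
  · rw [if_pos h1, if_pos h2] at h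
    have d1 : decide (π < y) = false := by simp [not_lt.mpr (le_of_lt h1)]
    have d2 : decide (π < z) = false := by simp [not_lt.mpr (le_of_lt h2)]
    rw [d1, d2]
    norm_num
    linear_combination -h
  · rw [if_pos h1, if_neg (by linarith)] at h
    have d1 : decide (π < y) = false := by simp [not_lt.mpr (le_of_lt h1)]
    have d2 : decide (π < z) = true := by simp [h2]
    rw [d1, d2]
    norm_num
    linear_combination -h
  · rw [if_neg (by linarith), if_pos h2] at h
    have d1 : decide (π < y) = true := by simp [h1]
    have d2 : decide (π < z) = false := by simp [not_lt.mpr (le_of_lt h2)]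
    rw [d1, d2]
    norm_num
    linear_combination -h
  · rw [if_neg (by linarith), if_neg (by linarith)] at h
    have d1 : decide (π < y) = true := by simp [h1]
    have d2 : decide (π < z) = true := by simp [h2]
    rw [d1, d2]
    norm_num
    linear_combination -h

lemma st14_construct (ca cb cc u : ℝ) (hb : cb^2 ≤ 1) (hc : cc^2 ≤ 1) (hu : u^2 ≤ 1)
    (key : Real.sqrt (1-cb^2) * Real.sqrt (1-cc^2) * u = ca - cb*cc) :
    ∃ p q r : E3, ‖p‖ = 1 ∧ ‖q‖ = 1 ∧ ‖r‖ = 1 ∧ ⟪p,q⟫ = cc ∧ ⟪p,r⟫ = cb ∧ ⟪q,r⟫ = ca := by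
  set nb := Real.sqrt (1-cb^2) with hnb
  set nc := Real.sqrt (1-cc^2) with hnc
  set nu := Real.sqrt (1-u^2) with hnu
  have hb2 : nb^2 = 1 - cb^2 := Real.sq_sqrt (by linarith)
  have hc2 : nc^2 = 1 - cc^2 := Real.sq_sqrt (by linarith)
  have hu2 : nu^2 = 1 - u^2 := Real.sq_sqrt (by linarith)
  refine ⟨(WithLp.equiv 2 _).symm ![0,0,1], (WithLp.equiv 2 _).symm ![nc,0,cc],
    (WithLp.equiv 2 _).symm ![nb*u, nb*nu, cb], ?_, ?_, ?_, ?_, ?_, ?_⟩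
  · rw [EuclideanSpace.norm_eq]
    simp [Fin.sum_univ_three]
  · rw [EuclideanSpace.norm_eq]
    simp [Fin.sum_univ_three]
    rw [show nc^2 + cc^2 = 1 by nlinarith]
  · rw [EuclideanSpace.norm_eq]
    simp [Fin.sum_univ_three]
    rw [show (nb*u)^2 + (nb*nu)^2 + cb^2 = 1 by nlinarith]
  · rw [PiLp.inner_apply]
    simp [Fin.sum_univ_three]
  · rw [PiLp.inner_apply]
    simp [Fin.sum_univ_three]
  · rw [PiLp.inner_apply]
    simp [Fin.sum_univ_three]
    nlinarith [key]

lemma st14_gram_li (p q r : E3) (ca cb cc : ℝ)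
    (hdet : 0 < 1 - ca^2 - cb^2 - cc^2 + 2*ca*cb*cc)
    (hp : ⟪p,p⟫ = 1) (hq : ⟪q,q⟫ = 1) (hr : ⟪r,r⟫ = 1)
    (hpq : ⟪p,q⟫ = cc) (hpr : ⟪p,r⟫ = cb) (hqr : ⟪q,r⟫ = ca) :
    LinearIndependent ℝ ![p,q,r] := by
  have hD : (1 - ca^2 - cb^2 - cc^2 + 2*ca*cb*cc) ≠ 0 := ne_of_gt hdet
  rw [Fintype.linearIndependent_iff]
  intro g hg
  rw [Fin.sum_univ_three] at hg
  simp only [Matrix.cons_val_zero, Matrix.cons_val_one, Matrix.head_cons,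
    Matrix.cons_val_two, Matrix.tail_cons] at hg
  have expand : ∀ v : E3, ⟪v, g 0 • p + g 1 • q + g 2 • r⟫
      = g 0 * ⟪v,p⟫ + g 1 * ⟪v,q⟫ + g 2 * ⟪v,r⟫ := by
    intro v
    simp only [inner_add_right, real_inner_smul_right]
  have cqp : ⟪q,p⟫ = cc := by rw [real_inner_comm]; exact hpq
  have crp : ⟪r,p⟫ = cb := by rw [real_inner_comm]; exact hpr
  have crq : ⟪r,q⟫ = ca := by rw [real_inner_comm]; exact hqr
  have e1 : g 0 * 1 + g 1 * cc + g 2 * cb = 0 := by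
    have := expand p; rw [hg, inner_zero_right, hp, hpq, hpr] at this; linarith
  have e2 : g 0 * cc + g 1 * 1 + g 2 * ca = 0 := by
    have := expand q; rw [hg, inner_zero_right, cqp, hq, hqr] at this; linarith
  have e3 : g 0 * cb + g 1 * ca + g 2 * 1 = 0 := by
    have := expand r; rw [hg, inner_zero_right, crp, crq, hr] at this; linarith
  intro i
  fin_cases i
  · have h0 : g 0 * (1 - ca^2 - cb^2 - cc^2 + 2*ca*cb*cc) = 0 := by
      linear_combination (1-ca^2)*e1 + (ca*cb-cc)*e2 + (ca*cc-cb)*e3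
    simpa [hD] using mul_eq_zero.mp h0
  · have h0 : g 1 * (1 - ca^2 - cb^2 - cc^2 + 2*ca*cb*cc) = 0 := by
      linear_combination (ca*cb-cc)*e1 + (1-cb^2)*e2 + (cb*cc-ca)*e3
    simpa [hD] using mul_eq_zero.mp h0
  · have h0 : g 2 * (1 - ca^2 - cb^2 - cc^2 + 2*ca*cb*cc) = 0 := by
      linear_combination (ca*cc-cb)*e1 + (cb*cc-ca)*e2 + (1-cc^2)*e3
    simpa [hD] using mul_eq_zero.mp h0

lemma st14_gram_isometry (p q r p' q' r' : E3) (ca cb cc : ℝ)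
    (hdet : 0 < 1 - ca^2 - cb^2 - cc^2 + 2*ca*cb*cc)
    (hp : ⟪p,p⟫ = 1) (hq : ⟪q,q⟫ = 1) (hr : ⟪r,r⟫ = 1)
    (hpq : ⟪p,q⟫ = cc) (hpr : ⟪p,r⟫ = cb) (hqr : ⟪q,r⟫ = ca)
    (hp' : ⟪p',p'⟫ = 1) (hq' : ⟪q',q'⟫ = 1) (hr' : ⟪r',r'⟫ = 1)
    (hpq' : ⟪p',q'⟫ = cc) (hpr' : ⟪p',r'⟫ = cb) (hqr' : ⟪q',r'⟫ = ca) :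
    ∃ g : E3 ≃ₗᵢ[ℝ] E3, g p = p' ∧ g q = q' ∧ g r = r' := by
  have li := st14_gram_li p q r ca cb cc hdet hp hq hr hpq hpr hqr
  have li' := st14_gram_li p' q' r' ca cb cc hdet hp' hq' hr' hpq' hpr' hqr'
  have hcard : Fintype.card (Fin 3) = Module.finrank ℝ E3 := by
    simp [finrank_euclideanSpace_fin]
  let B := basisOfLinearIndependentOfCardEqFinrank li hcard
  let B' := basisOfLinearIndependentOfCardEqFinrank li' hcard
  have hB : ∀ i, B i = ![p,q,r] i := fun i =>
    congrFun (coe_basisOfLinearIndependentOfCardEqFinrank li hcard) i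
  have hB' : ∀ i, B' i = ![p',q',r'] i := fun i =>
    congrFun (coe_basisOfLinearIndependentOfCardEqFinrank li' hcard) i
  let g₀ : E3 ≃ₗ[ℝ] E3 := B.equiv B' (Equiv.refl _)
  have hg₀ : ∀ i, g₀ (B i) = B' i := fun i => B.equiv_apply i B' (Equiv.refl _)
  have hinner : ∀ x y : E3, ⟪g₀ x, g₀ y⟫ = ⟪x, y⟫ := by
    have hbil : ((innerₗ E3).compl₁₂ (g₀ : E3 →ₗ[ℝ] E3) (g₀ : E3 →ₗ[ℝ] E3))
        = innerₗ E3 := by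
      apply LinearMap.ext_basis B B
      intro i j
      simp only [LinearMap.compl₁₂_apply, LinearEquiv.coe_coe, hg₀,
        innerₗ_apply_apply]
      have cqp : ⟪q,p⟫ = cc := by rw [real_inner_comm]; exact hpq
      have crp : ⟪r,p⟫ = cb := by rw [real_inner_comm]; exact hpr
      have crq : ⟪r,q⟫ = ca := by rw [real_inner_comm]; exact hqr
      have cqp' : ⟪q',p'⟫ = cc := by rw [real_inner_comm]; exact hpq'
      have crp' : ⟪r',p'⟫ = cb := by rw [real_inner_comm]; exact hpr'
      have crq' : ⟪r',q'⟫ = ca := by rw [real_inner_comm]; exact hqr'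
      fin_cases i <;> fin_cases j <;> simp only [hB, hB'] <;>
        first
          | exact hp'.trans hp.symm | exact hq'.trans hq.symm | exact hr'.trans hr.symm
          | exact hpq'.trans hpq.symm | exact hpr'.trans hpr.symm | exact hqr'.trans hqr.symm
          | exact cqp'.trans cqp.symm | exact crp'.trans crp.symm | exact crq'.trans crq.symm
    intro x y
    have := LinearMap.congr_fun (LinearMap.congr_fun hbil x) y
    simpa using this
  refine ⟨LinearEquiv.isometryOfInner g₀ hinner, ?_, ?_, ?_⟩
  · show g₀ p = p'
    have := hg₀ 0; rw [hB 0, hB' 0] at this; simpa using this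
  · show g₀ q = q'
    have := hg₀ 1; rw [hB 1, hB' 1] at this; simpa using this
  · show g₀ r = r'
    have := hg₀ 2; rw [hB 2, hB' 2] at this; simpa using this

lemma st14_inner_of_glen (x y : E3) (hx : ‖x‖ = 1) (hy : ‖y‖ = 1) (s : Bool) (t : ℝ)
    (h : glen x y s = t) : ⟪x,y⟫ = Real.cos t := by
  have h1 : |⟪x,y⟫| ≤ 1 := by
    have := abs_real_inner_le_norm x y
    rw [hx, hy] at this; linarith
  have h2 : Real.cos (sdist x y) = ⟪x,y⟫ :=
    Real.cos_arccos (by linarith [abs_le.mp h1]) (by linarith [abs_le.mp h1])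
  cases s
  · simp only [glen, Bool.false_eq_true, if_false] at h
    rw [← h, h2]
  · simp only [glen, if_true] at h
    rw [← h2, show sdist x y = 2*π - t by linarith, Real.cos_two_pi_sub]

lemma st14_glen_eq (x y : E3) (t : ℝ) (ht : t ∈ Set.Ioo 0 π ∪ Set.Ioo π (2*π))
    (h : ⟪x,y⟫ = Real.cos t) : glen x y (decide (π < t)) = t := by
  have hs : sdist x y = if t < π then t else 2*π - t := by
    rw [sdist, h, st14_arccos_cos_of ht]
  rcases ht with ⟨h1,h2⟩|⟨h1,h2⟩
  · rw [glen, if_neg (by simp [not_lt.mpr (le_of_lt h2)]), hs, if_pos h2]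
  · rw [glen, if_pos (by simp [h1]), hs, if_neg (by linarith)]
    ring

end Aux

/-- Given real numbers `a, b, c, A, B, C ∈ (0,π) ∪ (π,2π)` satisfying all of
the generalized spherical trigonometric identities (the three cosine rules,
the three dual cosine rules, and the three sine rules), there exists a
generalized spherical triangle, possibly self-intersecting, realizing these
side lengths and interior angles, and it is unique up to isometry. -/
theorem statement14 (a b c A B C : ℝ)
    (ha : a ∈ Set.Ioo 0 π ∪ Set.Ioo π (2 * π))
    (hb : b ∈ Set.Ioo 0 π ∪ Set.Ioo π (2 * π))
    (hc : c ∈ Set.Ioo 0 π ∪ Set.Ioo π (2 * π))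
    (hA : A ∈ Set.Ioo 0 π ∪ Set.Ioo π (2 * π))
    (hB : B ∈ Set.Ioo 0 π ∪ Set.Ioo π (2 * π))
    (hC : C ∈ Set.Ioo 0 π ∪ Set.Ioo π (2 * π))
    (hcos1 : Real.cos a = Real.cos b * Real.cos c +
      Real.sin b * Real.sin c * Real.cos A)
    (hcos2 : Real.cos b = Real.cos c * Real.cos a +
      Real.sin c * Real.sin a * Real.cos B)
    (hcos3 : Real.cos c = Real.cos a * Real.cos b +
      Real.sin a * Real.sin b * Real.cos C)
    (hdual1 : Real.cos A = -(Real.cos B * Real.cos C) +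
      Real.sin B * Real.sin C * Real.cos a)
    (hdual2 : Real.cos B = -(Real.cos C * Real.cos A) +
      Real.sin C * Real.sin A * Real.cos b)
    (hdual3 : Real.cos C = -(Real.cos A * Real.cos B) +
      Real.sin A * Real.sin B * Real.cos c)
    (hsin1 : Real.sin a * Real.sin B = Real.sin A * Real.sin b)
    (hsin2 : Real.sin b * Real.sin C = Real.sin B * Real.sin c)
    (hsin3 : Real.sin c * Real.sin A = Real.sin C * Real.sin a) :
    (∃ (p q r : E3) (sa sb sc o : Bool), GTri p q r sa sb sc o a b c A B C) ∧
    (∀ (p q r p' q' r' : E3) (sa sb sc o sa' sb' sc' o' : Bool),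
      GTri p q r sa sb sc o a b c A B C →
      GTri p' q' r' sa' sb' sc' o' a b c A B C →
      ∃ g : E3 ≃ₗᵢ[ℝ] E3, g p = p' ∧ g q = q' ∧ g r = r') := by
  constructor
  · -- existence
    have keyA := st14_key hb hc hcos1
    have keyB := st14_key hc ha hcos2
    have keyC := st14_key ha hb hcos3
    set ta := decide (π < a) with hta
    set tb := decide (π < b) with htb
    set tc := decide (π < c) with htc
    have husq : ∀ (s : Bool) (X : ℝ), X ∈ Set.Ioo 0 π ∪ Set.Ioo π (2*π) →
        ((if s then (-1:ℝ) else 1) * Real.cos X)^2 ≤ 1 := by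
      intro s X hX
      have h1 := st14_cos_sq_lt hX
      have h2 : ((if s then (-1:ℝ) else 1) * Real.cos X)^2 = Real.cos X ^ 2 := by
        cases s <;> norm_num
      rw [h2]; linarith
    obtain ⟨p, q, r, hp, hq, hr, hpq, hpr, hqr⟩ :=
      st14_construct (Real.cos a) (Real.cos b) (Real.cos c)
        ((if xor tb tc then (-1:ℝ) else 1) * Real.cos A)
        (le_of_lt (st14_cos_sq_lt hb)) (le_of_lt (st14_cos_sq_lt hc))
        (husq _ A hA) keyA
    -- the forced side choices
    have sqb := st14_sqrt_pos hb
    have sqc := st14_sqrt_pos hc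
    have sqa := st14_sqrt_pos ha
    -- the three spherical angles
    have cqp : ⟪q,p⟫ = Real.cos c := by rw [real_inner_comm]; exact hpq
    have crp : ⟪r,p⟫ = Real.cos b := by rw [real_inner_comm]; exact hpr
    have crq : ⟪r,q⟫ = Real.cos a := by rw [real_inner_comm]; exact hqr
    have eA : sangle q p r
        = Real.arccos ((if xor tb tc then (-1:ℝ) else 1) * Real.cos A) := by
      rw [st14_sangle_eq_arccos q p r hq hp hr, cqp, crp, hqr]
      congr 1
      rw [div_eq_iff (ne_of_gt (mul_pos sqc sqb))]
      linear_combination -keyA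
    have eB : sangle p q r
        = Real.arccos ((if xor ta tc then (-1:ℝ) else 1) * Real.cos B) := by
      rw [st14_sangle_eq_arccos p q r hp hq hr, hpq, crq, hpr]
      congr 1
      rw [div_eq_iff (ne_of_gt (mul_pos sqc sqa))]
      have : xor tc ta = xor ta tc := Bool.xor_comm _ _
      rw [this] at keyB
      linear_combination -keyB
    have eC : sangle p r q
        = Real.arccos ((if xor ta tb then (-1:ℝ) else 1) * Real.cos C) := by
      rw [st14_sangle_eq_arccos p r q hp hr hq, hpq, hpr, hqr]
      congr 1
      rw [div_eq_iff (ne_of_gt (mul_pos sqb sqa))]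
      linear_combination -keyC
    -- consistency of the side choice `o`
    have relAB : xor (decide (π<A)) (decide (π<B)) = xor ta tb := by
      have h := st14_sign_rel (st14_sin_sign ha) (st14_sin_sign hB)
        (st14_sin_sign hA) (st14_sin_sign hb) hsin1
      exact st14_xorsw _ _ _ _ h
    have relAC : xor (decide (π<A)) (decide (π<C)) = xor ta tc := by
      have h := st14_sign_rel (st14_sin_sign hc) (st14_sin_sign hA)
        (st14_sin_sign hC) (st14_sin_sign ha) hsin3
      have h2 := st14_xorsw _ _ _ _ h
      exact st14_xorcm _ _ _ _ h2
    have flipA : decide (A < π) = !decide (π < A) := by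
      rcases hA with ⟨h1,h2⟩|⟨h1,h2⟩ <;> simp [h2, not_lt.mpr (le_of_lt h2),
        h1, not_lt.mpr (le_of_lt h1)] <;> simp_all [not_lt.mpr (le_of_lt h1)]
    have flipB : decide (B < π) = !decide (π < B) := by
      rcases hB with ⟨h1,h2⟩|⟨h1,h2⟩ <;> simp [h2, not_lt.mpr (le_of_lt h2),
        h1, not_lt.mpr (le_of_lt h1)] <;> simp_all [not_lt.mpr (le_of_lt h1)]
    have flipC : decide (C < π) = !decide (π < C) := by
      rcases hC with ⟨h1,h2⟩|⟨h1,h2⟩ <;> simp [h2, not_lt.mpr (le_of_lt h2),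
        h1, not_lt.mpr (le_of_lt h1)] <;> simp_all [not_lt.mpr (le_of_lt h1)]
    have oB : st14_oCh ta tb tc A = st14_oCh tb ta tc B := by
      rw [st14_oCh, st14_oCh, flipA, flipB]
      exact st14_boolCh ta tb tc _ _ relAB
    have oC : st14_oCh ta tb tc A = st14_oCh tc ta tb C := by
      rw [st14_oCh, st14_oCh, flipA, flipC]
      exact st14_boolCh2 ta tb tc _ _ relAC
    refine ⟨p, q, r, ta, tb, tc, st14_oCh ta tb tc A, hp, hq, hr, ?_, ?_, ?_, ?_, ?_, ?_⟩
    · exact st14_glen_eq q r a ha hqr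
    · exact st14_glen_eq p r b hb hpr
    · exact st14_glen_eq p q c hc hpq
    · rw [eA]
      exact st14_vertex A ta tb tc hA
    · rw [eB, oB]
      exact st14_vertex B tb ta tc hB
    · rw [eC, oC]
      exact st14_vertex C tc ta tb hC
  · -- uniqueness
    intro p q r p' q' r' sa sb sc o sa' sb' sc' o' h h'
    obtain ⟨hp, hq, hr, hga, hgb, hgc, -, -, -⟩ := h
    obtain ⟨hp', hq', hr', hga', hgb', hgc', -, -, -⟩ := h'
    have hdet : 0 < 1 - (Real.cos a)^2 - (Real.cos b)^2 - (Real.cos c)^2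
        + 2*(Real.cos a)*(Real.cos b)*(Real.cos c) := by
      have h1 : Real.sin b^2 = 1 - Real.cos b^2 := Real.sin_sq b
      have h2 : Real.sin c^2 = 1 - Real.cos c^2 := Real.sin_sq c
      have h3 : Real.sin A^2 = 1 - Real.cos A^2 := Real.sin_sq A
      have e : 1 - (Real.cos a)^2 - (Real.cos b)^2 - (Real.cos c)^2
          + 2*(Real.cos a)*(Real.cos b)*(Real.cos c)
          = Real.sin b^2 * Real.sin c^2 * Real.sin A^2 := by
        linear_combination (-(Real.cos a) + Real.cos b*Real.cos c
            - Real.sin b*Real.sin c*Real.cos A) * hcos1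
          + (-(Real.sin c^2)) * h1 + (-(1-Real.cos b^2)) * h2
          + (-(Real.sin b^2*Real.sin c^2)) * h3
      rw [e]
      have pb : 0 < Real.sin b^2 :=
        lt_of_le_of_ne (sq_nonneg _) (Ne.symm (pow_ne_zero 2 (st14_sin_ne hb)))
      have pc : 0 < Real.sin c^2 :=
        lt_of_le_of_ne (sq_nonneg _) (Ne.symm (pow_ne_zero 2 (st14_sin_ne hc)))
      have pA : 0 < Real.sin A^2 :=
        lt_of_le_of_ne (sq_nonneg _) (Ne.symm (pow_ne_zero 2 (st14_sin_ne hA)))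
      exact mul_pos (mul_pos pb pc) pA
    have unit : ∀ v : E3, ‖v‖ = 1 → ⟪v,v⟫ = (1:ℝ) := by
      intro v hv; rw [real_inner_self_eq_norm_sq, hv]; norm_num
    exact st14_gram_isometry p q r p' q' r' (Real.cos a) (Real.cos b) (Real.cos c) hdet
      (unit p hp) (unit q hq) (unit r hr)
      (st14_inner_of_glen p q hp hq sc c hgc) (st14_inner_of_glen p r hp hr sb b hgb)
      (st14_inner_of_glen q r hq hr sa a hga)
      (unit p' hp') (unit q' hq') (unit r' hr')
      (st14_inner_of_glen p' q' hp' hq' sc' c hgc') (st14_inner_of_glen p' r' hp' hr' sb' b hgb')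
      (st14_inner_of_glen q' r' hq' hr' sa' a hga')
end
end
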